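/- arXiv:math/0412252 — 3 statements merged into one kernel-verified Lean document; each statement's English description precedes it below -/
import Mathlib

section
/- Let E be a finite-dimensional real vector space with a nondegenerate alternating bilinear form ω, and let q be a complex symmetric bilinear form on the complexification of E such that Re q(x,x) ≥ c‖x‖² for all real vectors x, with c > 0. Let A be the complex-linear operator on the complexification of E defined by q(x,y) = -ω(Ax,y). Then A has no real eigenvalue. -/
open TensorProduct

private lemma repr_aux {E : Type*} [AddCommGroup E] [Module ℝ E] (v : ℂ ⊗[ℝ] E) :
    ∃ x y : E, v = (1 : ℂ) ⊗ₜ[ℝ] x + Complex.I ⊗ₜ[ℝ] y := by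
  induction v using TensorProduct.induction_on with
  | zero => exact ⟨0, 0, by simp⟩
  | tmul z e =>
    refine ⟨z.re • e, z.im • e, ?_⟩
    rw [tmul_smul, tmul_smul, smul_tmul', smul_tmul', ← add_tmul]
    congr 1
    simp [Complex.real_smul, Complex.ext_iff]
  | add v₁ v₂ h₁ h₂ =>
    obtain ⟨x₁, y₁, e₁⟩ := h₁
    obtain ⟨x₂, y₂, e₂⟩ := h₂
    exact ⟨x₁ + x₂, y₁ + y₂, by rw [e₁, e₂, tmul_add, tmul_add]; abel⟩

private lemma real_aux {c a b : ℝ} (hc : 0 < c) (h : c * a ^ 2 + c * b ^ 2 ≤ 0) :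
    a = 0 ∧ b = 0 := by
  have ha : a ^ 2 ≤ 0 := by nlinarith [sq_nonneg b]
  have hb : b ^ 2 ≤ 0 := by nlinarith [sq_nonneg a]
  constructor
  · exact pow_eq_zero_iff (n := 2) (by norm_num) |>.mp (le_antisymm ha (sq_nonneg a))
  · exact pow_eq_zero_iff (n := 2) (by norm_num) |>.mp (le_antisymm hb (sq_nonneg b))

/-- Let `E` be a finite-dimensional real vector space with a nondegenerate
alternating bilinear form `ω`, extended complex-bilinearly to a form `Ω` on the
complexification `ℂ ⊗[ℝ] E`. Let `q` be a complex symmetric bilinear form on the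
complexification with `Re q(x,x) ≥ c‖x‖²` (`c > 0`) for real vectors `x`, and let
`A` be the complex-linear operator defined by `q(x,y) = -Ω(Ax,y)`. Then `A` has
no real eigenvalue. -/
theorem stmt_0 {E : Type*} [NormedAddCommGroup E] [NormedSpace ℝ E]
    [FiniteDimensional ℝ E]
    (ω : E →ₗ[ℝ] E →ₗ[ℝ] ℝ) (halt : ∀ x, ω x x = 0)
    (hnd : ∀ x, (∀ y, ω x y = 0) → x = 0)
    (Ω : (ℂ ⊗[ℝ] E) →ₗ[ℂ] (ℂ ⊗[ℝ] E) →ₗ[ℂ] ℂ)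
    (hΩ : ∀ x y : E, Ω ((1 : ℂ) ⊗ₜ[ℝ] x) ((1 : ℂ) ⊗ₜ[ℝ] y) = (ω x y : ℂ))
    (q : (ℂ ⊗[ℝ] E) →ₗ[ℂ] (ℂ ⊗[ℝ] E) →ₗ[ℂ] ℂ)
    (hsym : ∀ u v, q u v = q v u)
    (c : ℝ) (hc : 0 < c)
    (hpos : ∀ x : E, c * ‖x‖ ^ 2 ≤ (q ((1 : ℂ) ⊗ₜ[ℝ] x) ((1 : ℂ) ⊗ₜ[ℝ] x)).re)
    (A : Module.End ℂ (ℂ ⊗[ℝ] E))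
    (hA : ∀ u v, q u v = -Ω (A u) v) :
    ∀ r : ℝ, ¬ Module.End.HasEigenvalue A (r : ℂ) := by
  intro r hr
  obtain ⟨v, hv⟩ := hr.exists_hasEigenvector
  obtain ⟨x, y, hxy⟩ := repr_aux v
  have hskew : ω y x = -ω x y := by
    have h := halt (x + y)
    simp only [map_add, LinearMap.add_apply, halt x, halt y] at h
    linarith
  have hAv : A v = (r : ℂ) • v := hv.apply_eq_smul
  have hv' : v = (1 : ℂ) ⊗ₜ[ℝ] x + Complex.I • ((1 : ℂ) ⊗ₜ[ℝ] y) := by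
    rw [hxy, smul_tmul']; norm_num
  set u1 : ℂ ⊗[ℝ] E := (1 : ℂ) ⊗ₜ[ℝ] x with hu1def
  set u2 : ℂ ⊗[ℝ] E := (1 : ℂ) ⊗ₜ[ℝ] y with hu2def
  have hΩvw : Ω v (u1 - Complex.I • u2) = -(2 * Complex.I * (ω x y : ℂ)) := by
    rw [hv']
    simp only [map_add, map_sub, map_smul, LinearMap.add_apply, LinearMap.sub_apply,
      LinearMap.smul_apply, smul_eq_mul, hu1def, hu2def, hΩ, halt x, halt y, hskew]
    push_cast
    ring
  have hqvw : q v (u1 - Complex.I • u2) = q u1 u1 + q u2 u2 := by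
    rw [hv']
    simp only [map_add, map_sub, map_smul, LinearMap.add_apply, LinearMap.sub_apply,
      LinearMap.smul_apply, smul_eq_mul]
    rw [hsym u2 u1]
    generalize q u1 u1 = a
    generalize q u1 u2 = b
    generalize q u2 u2 = d
    have h2 : Complex.I ^ 2 = -1 := Complex.I_sq
    linear_combination (-d) * h2
  have hqvw2 : q v (u1 - Complex.I • u2) = 2 * (r : ℂ) * Complex.I * (ω x y : ℂ) := by
    rw [hA, hAv, map_smul, LinearMap.smul_apply, hΩvw, smul_eq_mul]
    ring
  have hre : (q u1 u1).re + (q u2 u2).re = 0 := by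
    have h := hqvw.symm.trans hqvw2
    have h2 := congrArg Complex.re h
    simpa using h2
  have hx := hpos x
  have hy := hpos y
  rw [← hu1def] at hx
  rw [← hu2def] at hy
  have key : c * ‖x‖ ^ 2 + c * ‖y‖ ^ 2 ≤ 0 := (add_le_add hx hy).trans_eq hre
  obtain ⟨hnx, hny⟩ := real_aux hc key
  have hx0 : x = 0 := norm_eq_zero.mp hnx
  have hy0 : y = 0 := norm_eq_zero.mp hny
  exact hv.2 (by rw [hxy, hu1def, hx0, hy0]; simp)
end

section
/- Let A be a Banach algebra with unit, S₀ ∈ A, and R = S₀ - S₀² with ‖R‖ < 1/4. Define T = (2S₀ - 1) · (1 - 4R)^{-1/2}, where (1 - 4R)^{-1/2} is given by the convergent binomial series Σ_{k≥0} C(2k,k) R^k. Then T² = 1, and hence S = (1 + T)/2 is an idempotent: S² = S. -/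
/-!
Write `F = ∑ C(2k, k) Rᵏ`. The convolution identity `∑_{i+j=n} C(2i, i) C(2j, j) = 4ⁿ` makes the
Cauchy square of `F` the geometric series of `4R`, so `(1 - 4R) F² = 1`. Since `R` commutes with
`S₀`, the element `2S₀ - 1`, whose square is `1 - 4R`, commutes with `F`, and `T = (2S₀ - 1) F`
squares to `(1 - 4R) F² = 1`. An involution `T` gives the idempotent `(1 + T)/2`.
-/

open Finset Nat

theorem Finset.Nat.two_mul_sum_antidiagonal_fst_mul {M : Type*} [CommSemiring M] (n : ℕ)
    (f : ℕ × ℕ → M) (hf : ∀ p, f p.swap = f p) :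
    2 * ∑ p ∈ antidiagonal n, (p.1 : M) * f p = n * ∑ p ∈ antidiagonal n, f p := by
  conv_lhs => rw [two_mul]; enter [2]; rw [← Finset.Nat.sum_antidiagonal_swap]
  rw [← sum_add_distrib, mul_sum]
  refine sum_congr rfl fun p hp => ?_
  rw [Prod.fst_swap, hf, ← add_mul, ← Nat.cast_add, mem_antidiagonal.mp hp]

theorem Nat.sum_antidiagonal_centralBinom_mul (n : ℕ) :
    ∑ p ∈ antidiagonal n, centralBinom p.1 * centralBinom p.2 = 4 ^ n := by
  induction n with
  | zero => simp
  | succ n ih =>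
    set c : ℕ × ℕ → ℕ := fun p => centralBinom p.1 * centralBinom p.2
    have moment (m : ℕ) : 2 * ∑ p ∈ antidiagonal m, p.1 * c p = m * ∑ p ∈ antidiagonal m, c p := by
      simpa using Finset.Nat.two_mul_sum_antidiagonal_fst_mul m c fun p => Nat.mul_comm _ _
    -- `(i+1) C(2i+2, i+1) = 2 (2i+1) C(2i, i)` reduces the first moment at `n + 1` to moments at `n`
    have hmoment : ∑ p ∈ antidiagonal (n + 1), p.1 * c p = 2 * (n + 1) * 4 ^ n := by
      calc ∑ p ∈ antidiagonal (n + 1), p.1 * c p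
          = ∑ p ∈ antidiagonal n, (2 * (2 * p.1 + 1) * centralBinom p.1) * centralBinom p.2 := by
            rw [Finset.Nat.sum_antidiagonal_succ]
            simp only [c, zero_mul, zero_add, ← mul_assoc, succ_mul_centralBinom_succ]
        _ = 2 * (2 * ∑ p ∈ antidiagonal n, p.1 * c p) + 2 * ∑ p ∈ antidiagonal n, c p := by
            simp only [mul_sum, ← sum_add_distrib, c]
            refine sum_congr rfl fun p _ => ?_
            ring
        _ = 2 * (n + 1) * 4 ^ n := by
            rw [moment n, ih]
            ring
    apply Nat.eq_of_mul_eq_mul_left n.add_one_pos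
    rw [← moment (n + 1), hmoment]
    ring

section BanachAlgebra

variable {A : Type*} [NormedRing A]

theorem norm_four_mul_lt_one {R : A} (hR : ‖R‖ < 1 / 4) : ‖(4 : A) * R‖ < 1 := by
  calc ‖(4 : A) * R‖ = ‖(4 : ℕ) • R‖ := by rw [nsmul_eq_mul, Nat.cast_ofNat]
    _ ≤ 4 * ‖R‖ := by simpa using norm_nsmul_le (n := 4) (a := R)
    _ < 1 := by linarith

theorem summable_norm_centralBinom_mul_pow [NormedAlgebra ℝ A] {R : A} (hR : ‖R‖ < 1 / 4) :
    Summable fun k => ‖(centralBinom k : A) * R ^ k‖ := by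
  have h4R : ‖(4 : ℝ) • R‖ < 1 := by rw [norm_smul]; norm_num; linarith
  refine .of_nonneg_of_le (fun _ => norm_nonneg _) (fun k => ?_)
    (summable_norm_geometric_of_norm_lt_one h4R)
  calc ‖(centralBinom k : A) * R ^ k‖ = centralBinom k * ‖R ^ k‖ := by
        rw [← nsmul_eq_mul, ← Nat.cast_smul_eq_nsmul ℝ, norm_smul, Real.norm_natCast]
    _ ≤ 4 ^ k * ‖R ^ k‖ := by gcongr; exact_mod_cast centralBinom_le_four_pow k
    _ = ‖((4 : ℝ) • R) ^ k‖ := by rw [smul_pow, norm_smul]; norm_num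

theorem tsum_centralBinom_mul_pow_mul_self [NormedAlgebra ℝ A] [CompleteSpace A] {R : A}
    (hR : ‖R‖ < 1 / 4) :
    (∑' k, (centralBinom k : A) * R ^ k) * (∑' k, (centralBinom k : A) * R ^ k) =
      ∑' n, ((4 : A) * R) ^ n := by
  have hsum := summable_norm_centralBinom_mul_pow hR
  rw [tsum_mul_tsum_eq_tsum_sum_antidiagonal_of_summable_norm hsum hsum]
  refine tsum_congr fun n => ?_
  calc ∑ p ∈ antidiagonal n, (centralBinom p.1 : A) * R ^ p.1 * (centralBinom p.2 * R ^ p.2)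
      = ∑ p ∈ antidiagonal n, ((centralBinom p.1 * centralBinom p.2 : ℕ) : A) * R ^ n := by
        refine sum_congr rfl fun p hp => ?_
        rw [(Nat.cast_commute _ _).symm.mul_mul_mul_comm, ← pow_add, mem_antidiagonal.mp hp,
          Nat.cast_mul]
    _ = ((4 : A) * R) ^ n := by
        rw [← sum_mul, ← Nat.cast_sum, sum_antidiagonal_centralBinom_mul,
          Nat.cast_pow, Nat.cast_ofNat, (Commute.ofNat_left 4 R).mul_pow]

theorem one_sub_four_mul_mul_tsum_centralBinom_mul_pow_mul_self [NormedAlgebra ℝ A]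
    [CompleteSpace A] {R : A} (hR : ‖R‖ < 1 / 4) :
    (1 - 4 * R) * ((∑' k, (centralBinom k : A) * R ^ k) * (∑' k, (centralBinom k : A) * R ^ k))
      = 1 := by
  rw [tsum_centralBinom_mul_pow_mul_self hR, mul_neg_geom_series _ (norm_four_mul_lt_one hR)]

end BanachAlgebra

theorem isIdempotentElem_inv_two_smul_one_add {K A : Type*} [Field K] [CharZero K] [Ring A]
    [Algebra K A] {T : A} (hT : T * T = 1) : IsIdempotentElem ((2⁻¹ : K) • (1 + T)) := by
  have hsq : (1 + T) * (1 + T) = (2 : K) • (1 + T) := by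
    simp only [mul_add, add_mul, hT, one_mul, mul_one, two_smul]
    abel
  rw [IsIdempotentElem, smul_mul_smul_comm, hsq, smul_smul]
  norm_num

/-- If `S₀` is an approximate idempotent in a unital Banach algebra, with
`R = S₀ - S₀²`, `‖R‖ < 1/4`, then `T = (2S₀-1)·Σ C(2k,k) R^k` satisfies `T² = 1`,
and `S = (1+T)/2` is an idempotent. -/
theorem stmt_4 {A : Type*} [NormedRing A] [NormedAlgebra ℝ A] [CompleteSpace A]
    (S₀ R : A) (hR : R = S₀ - S₀ ^ 2) (hnorm : ‖R‖ < 1 / 4) :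
    (2 * S₀ - 1) * (∑' k : ℕ, (Nat.centralBinom k : A) * R ^ k) *
      ((2 * S₀ - 1) * (∑' k : ℕ, (Nat.centralBinom k : A) * R ^ k)) = 1 ∧
    ((2⁻¹ : ℝ) • (1 + (2 * S₀ - 1) * (∑' k : ℕ, (Nat.centralBinom k : A) * R ^ k))) *
      ((2⁻¹ : ℝ) • (1 + (2 * S₀ - 1) * (∑' k : ℕ, (Nat.centralBinom k : A) * R ^ k)))
      = (2⁻¹ : ℝ) • (1 + (2 * S₀ - 1) * (∑' k : ℕ, (Nat.centralBinom k : A) * R ^ k)) := by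
  set F := ∑' k : ℕ, (Nat.centralBinom k : A) * R ^ k
  have hS₀R : Commute S₀ R := hR ▸ (Commute.refl S₀).sub_right ((Commute.refl S₀).pow_right 2)
  have hF : Commute (2 * S₀ - 1) F := Commute.tsum_right _ fun k =>
    ((Commute.ofNat_left 2 _).mul_left
      ((Nat.cast_commute _ S₀).symm.mul_right (hS₀R.pow_right k))).sub_left (Commute.one_left _)
  have hsq : (2 * S₀ - 1) * (2 * S₀ - 1) = 1 - 4 * R := by rw [hR]; noncomm_ring
  have hT : (2 * S₀ - 1) * F * ((2 * S₀ - 1) * F) = 1 := by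
    rw [hF.symm.mul_mul_mul_comm, hsq,
      one_sub_four_mul_mul_tsum_centralBinom_mul_pow_mul_self hnorm]
  exact ⟨hT, isIdempotentElem_inv_two_smul_one_add hT⟩
end

section
/- Let A be a unital Banach algebra and S₀ ∈ A with R = S₀ - S₀², ‖R‖ < 1/4. Then the idempotent S = (1 + (2S₀-1)(1-4R)^{-1/2})/2 satisfies S - S₀ = (2S₀ - 1)·Σ_{k≥1} c_k R^k where c_k = (2k-1)!/(k!(k-1)!); in particular S lies in the closed subalgebra generated by S₀ and 1, and ‖S - S₀‖ ≤ ‖2S₀-1‖ · Σ_{k≥1} c_k ‖R‖^k < ∞. -/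
/-! Since `(1-4R)^{-1/2} = 1 + Σ_{k≥1} C(2k,k) R^k`, the constant term `1` turns
`(1 + (2S₀-1)(1-4R)^{-1/2})/2 - S₀` into `(2S₀-1)·Σ_{k≥1} (C(2k,k)/2) R^k`, and
`C(2k,k)/2 = c_k`. The bound `C(2k,k) ≤ 4^k` makes both series converge when `‖R‖ < 1/4`,
and every partial sum is a polynomial in `S₀`. -/

open Nat

lemma centralBinom_succ_mul_factorial_mul_factorial (k : ℕ) :
    centralBinom (k + 1) * ((k + 1)! * k !) = 2 * (2 * k + 1)! := by
  apply Nat.eq_of_mul_eq_mul_left k.succ_pos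
  calc (k + 1) * (centralBinom (k + 1) * ((k + 1)! * k !))
      = centralBinom (k + 1) * (k + 1)! * (2 * (k + 1) - (k + 1))! := by
        rw [show 2 * (k + 1) - (k + 1) = k + 1 by omega, factorial_succ k]
        ring
    _ = (2 * k + 1 + 1)! := by
        rw [centralBinom_eq_two_mul_choose,
          Nat.choose_mul_factorial_mul_factorial (show k + 1 ≤ 2 * (k + 1) by omega)]
        ring_nf
    _ = (k + 1) * (2 * (2 * k + 1)!) := by
        rw [factorial_succ]
        ring

lemma factorial_div_eq_centralBinom_succ_div_two (k : ℕ) :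
    ((2 * (k + 1) - 1)! : ℝ) / ((k + 1)! * k !) = (centralBinom (k + 1) : ℝ) / 2 := by
  rw [show 2 * (k + 1) - 1 = 2 * k + 1 by omega, div_eq_div_iff (by positivity) two_ne_zero,
    mul_comm]
  exact_mod_cast (centralBinom_succ_mul_factorial_mul_factorial k).symm

lemma summable_centralBinom_mul_pow {r : ℝ} (hr₀ : 0 ≤ r) (hr : r < 1 / 4) :
    Summable fun k => (centralBinom k : ℝ) * r ^ k := by
  refine Summable.of_nonneg_of_le (fun k => by positivity) (fun k => ?_)
    (summable_geometric_of_lt_one (by positivity) (by linarith : 4 * r < 1))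
  rw [mul_pow]
  gcongr
  exact_mod_cast centralBinom_le_four_pow k

lemma norm_natCast_mul_le {A : Type*} [NormedRing A] (n : ℕ) (x : A) :
    ‖(n : A) * x‖ ≤ n * ‖x‖ := by
  simpa only [nsmul_eq_mul] using norm_nsmul_le (n := n) (a := x)

lemma summable_centralBinom_mul_pow_of_norm_lt {A : Type*} [NormedRing A] [CompleteSpace A]
    {R : A} (hR : ‖R‖ < 1 / 4) : Summable fun k => (centralBinom k : A) * R ^ k := by
  refine .of_norm_bounded_eventually_nat (summable_centralBinom_mul_pow (norm_nonneg R) hR) ?_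
  filter_upwards [Filter.eventually_ge_atTop 1] with k hk
  exact (norm_natCast_mul_le _ _).trans
    (mul_le_mul_of_nonneg_left (norm_pow_le' R hk) (Nat.cast_nonneg _))

lemma inv_two_smul_one_add_mul_sub {A : Type*} [Ring A] [Algebra ℝ A] (s x : A) :
    (2⁻¹ : ℝ) • (1 + (2 * s - 1) * x) - s = (2 * s - 1) * ((2⁻¹ : ℝ) • (x - 1)) := by
  have h : (2 * s - 1) * (x - 1) = 1 + (2 * s - 1) * x - (2 : ℝ) • s := by
    rw [two_smul]
    noncomm_ring
  rw [mul_smul_comm, h, smul_sub, smul_smul]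
  norm_num

section NormedAlgebra

variable {A : Type*} [NormedRing A] [NormedAlgebra ℝ A]

lemma tsum_centralBinom_succ_div_two_smul_pow_succ {R : A}
    (hR : Summable fun k => (centralBinom k : A) * R ^ k) :
    ∑' k, ((centralBinom (k + 1) : ℝ) / 2) • R ^ (k + 1) =
      (2⁻¹ : ℝ) • (∑' k, (centralBinom k : A) * R ^ k - 1) := by
  rw [hR.tsum_eq_zero_add]
  simp only [centralBinom_zero, cast_one, pow_zero, mul_one, add_sub_cancel_left]
  rw [← tsum_const_smul'']
  congr with k
  rw [div_eq_inv_mul, mul_smul, Nat.cast_smul_eq_nsmul, nsmul_eq_mul]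

lemma norm_tsum_smul_pow_succ_le {c : ℕ → ℝ} (hc : ∀ k, 0 ≤ c k) (R : A)
    (hsum : Summable fun k => c k * ‖R‖ ^ (k + 1)) :
    ‖∑' k, c k • R ^ (k + 1)‖ ≤ ∑' k, c k * ‖R‖ ^ (k + 1) := by
  refine tsum_of_norm_bounded hsum.hasSum fun k => ?_
  rw [norm_smul, Real.norm_of_nonneg (hc k)]
  exact mul_le_mul_of_nonneg_left (norm_pow_le' R k.succ_pos) (hc k)

end NormedAlgebra

/-- The correction `S` of an approximate projector `S₀` given by
`S = (1 + (2S₀-1)(1-4R)^{-1/2})/2` satisfies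
`S - S₀ = (2S₀-1)·Σ_{k≥1} c_k R^k` with `c_k = (2k-1)!/(k!(k-1)!)`;
in particular `S` lies in the closed subalgebra generated by `S₀` (and 1),
and `‖S - S₀‖ ≤ ‖2S₀-1‖·Σ_{k≥1} c_k ‖R‖^k < ∞`. -/
theorem stmt_19 {A : Type*} [NormedRing A] [NormedAlgebra ℝ A] [CompleteSpace A]
    (S₀ R S : A) (hR : R = S₀ - S₀ ^ 2) (hnorm : ‖R‖ < 1 / 4)
    (hS : S = (2⁻¹ : ℝ) •
      (1 + (2 * S₀ - 1) * (∑' k : ℕ, (Nat.centralBinom k : A) * R ^ k))) :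
    S - S₀ = (2 * S₀ - 1) *
        (∑' k : ℕ, ((Nat.factorial (2 * (k + 1) - 1) : ℝ) /
          (Nat.factorial (k + 1) * Nat.factorial k)) • R ^ (k + 1)) ∧
    S ∈ closure ((Algebra.adjoin ℝ {S₀} : Subalgebra ℝ A) : Set A) ∧
    Summable (fun k : ℕ => (Nat.factorial (2 * (k + 1) - 1) : ℝ) /
        (Nat.factorial (k + 1) * Nat.factorial k) * ‖R‖ ^ (k + 1)) ∧
    ‖S - S₀‖ ≤ ‖2 * S₀ - 1‖ *
        ∑' k : ℕ, (Nat.factorial (2 * (k + 1) - 1) : ℝ) /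
          (Nat.factorial (k + 1) * Nat.factorial k) * ‖R‖ ^ (k + 1) := by
  simp only [factorial_div_eq_centralBinom_succ_div_two]
  have hsum : Summable fun k => (centralBinom (k + 1) : ℝ) / 2 * ‖R‖ ^ (k + 1) := by
    simpa only [div_mul_eq_mul_div] using
      ((summable_nat_add_iff 1).2 (summable_centralBinom_mul_pow (norm_nonneg R) hnorm)).div_const 2
  have hdiff : S - S₀ = (2 * S₀ - 1) *
      ∑' k, ((centralBinom (k + 1) : ℝ) / 2) • R ^ (k + 1) := by
    rw [tsum_centralBinom_succ_div_two_smul_pow_succ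
      (summable_centralBinom_mul_pow_of_norm_lt hnorm), hS, inv_two_smul_one_add_mul_sub]
  refine ⟨hdiff, ?_, hsum, ?_⟩
  · set B := (Algebra.adjoin ℝ {S₀}).topologicalClosure
    have hS₀ : S₀ ∈ B :=
      Subalgebra.le_topologicalClosure _ (Algebra.self_mem_adjoin_singleton ℝ S₀)
    have hRB : R ∈ B := hR ▸ sub_mem hS₀ (pow_mem hS₀ 2)
    have hX : ∑' k, (centralBinom k : A) * R ^ k ∈ B :=
      tsum_mem (Subalgebra.isClosed_topologicalClosure _) fun k =>
        mul_mem (natCast_mem B _) (pow_mem hRB k)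
    rw [← Subalgebra.topologicalClosure_coe, hS]
    exact B.smul_mem (add_mem (one_mem B)
      (mul_mem (sub_mem (mul_mem (ofNat_mem B 2) hS₀) (one_mem B)) hX)) _
  · rw [hdiff]
    exact (norm_mul_le _ _).trans <| mul_le_mul_of_nonneg_left
      (norm_tsum_smul_pow_succ_le (fun k => by positivity) R hsum) (norm_nonneg _)
end
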